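/- arXiv:1412.4347 — 3 statements merged into one kernel-verified Lean document; each statement's English description precedes it below -/
import Mathlib

section
/- The function s ↦ q(s)² is integrable over ℝ, i.e. ∫_{-∞}^{∞} q(s)² ds < ∞. -/
/-!
Divided by `q > 0` the equation reads `q'' = -μ - s q' (a + 1 / (3 q))`. Where `q' = 0` this gives
`q'' = -μ < 0`, so `q' ≤ 0` on `[0, ∞)`. Moreover `q → 0`: if `q ≥ δ > 0`, then `q'' ≤ -μ / 2`
wherever `s q' ≥ -k` for a suitable `k > 0`, which traps `s q'` below `-k`, and then
`q ≤ C - k log s` turns negative. Once `q < (μ - 1/3) / (2a)`, on the curve `q + s q' = 0` we get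
`q'' < -(μ - 1/3) / 2`, so `(s q)' = q + s q'` can only cross zero downwards; it does cross, since
a uniformly concave `q` cannot stay positive. Hence `s q` is eventually decreasing, `q = O(1/s)` and
`q²` is integrable at `+∞`. The equation is invariant under `s ↦ -s`, which takes care of `-∞`.
-/

open MeasureTheory Filter Real Set Topology Asymptotics

theorem nonpos_of_hasDerivAt_neg_of_eq_zero {f f' : ℝ → ℝ} {x₀ : ℝ}
    (hf : ∀ t ≥ x₀, HasDerivAt f (f' t) t) (h₀ : f x₀ ≤ 0)
    (hbound : ∀ t ≥ x₀, f t = 0 → f' t < 0) : ∀ t ≥ x₀, f t ≤ 0 := fun _ ht =>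
  image_le_of_deriv_right_lt_deriv_boundary (B := fun _ => 0) (B' := fun _ => 0)
    (fun x hx => (hf x hx.1).continuousAt.continuousWithinAt)
    (fun x hx => (hf x hx.1).hasDerivWithinAt) h₀ (fun _ => hasDerivAt_const _ _)
    (fun x hx => hbound x hx.1) ⟨ht, le_rfl⟩

theorem antitoneOn_Ici_of_hasDerivAt_nonpos {f f' : ℝ → ℝ} {x₀ : ℝ}
    (hf : ∀ t ≥ x₀, HasDerivAt f (f' t) t) (hf' : ∀ t > x₀, f' t ≤ 0) :
    AntitoneOn f (Ici x₀) :=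
  antitoneOn_of_hasDerivWithinAt_nonpos (convex_Ici x₀)
    (fun t ht => (hf t ht).continuousAt.continuousWithinAt)
    (fun t ht => (hf t (interior_subset ht)).hasDerivWithinAt)
    (fun t ht => hf' t (by simpa using ht))

theorem tendsto_atBot_of_hasDerivAt_le {f f' g g' : ℝ → ℝ} {x₀ : ℝ}
    (hf : ∀ t ≥ x₀, HasDerivAt f (f' t) t) (hg : ∀ t ≥ x₀, HasDerivAt g (g' t) t)
    (hle : ∀ t > x₀, f' t ≤ g' t) (hg_tendsto : Tendsto g atTop atBot) :
    Tendsto f atTop atBot := by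
  have hanti : AntitoneOn (fun t => f t - g t) (Ici x₀) :=
    antitoneOn_Ici_of_hasDerivAt_nonpos (fun t ht => (hf t ht).sub (hg t ht))
      fun t ht => sub_nonpos.2 (hle t ht)
  refine tendsto_atBot_mono' atTop ?_ (tendsto_atBot_add_const_right _ (f x₀ - g x₀) hg_tendsto)
  filter_upwards [eventually_ge_atTop x₀] with t ht
  linarith [hanti self_mem_Ici ht ht]

theorem tendsto_atBot_of_hasDerivAt_le_neg {f f' : ℝ → ℝ} {x₀ m : ℝ} (hm : 0 < m)
    (hf : ∀ t ≥ x₀, HasDerivAt f (f' t) t) (hf' : ∀ t ≥ x₀, f' t ≤ -m) :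
    Tendsto f atTop atBot :=
  tendsto_atBot_of_hasDerivAt_le hf (fun t _ => (hasDerivAt_id t).const_mul (-m))
    (fun t ht => by simpa using hf' t ht.le) (tendsto_id.const_mul_atTop_of_neg (neg_neg_of_pos hm))

theorem tendsto_atBot_of_hasDerivAt_hasDerivAt_le_neg {f f' f'' : ℝ → ℝ} {x₀ m : ℝ} (hm : 0 < m)
    (hf : ∀ t ≥ x₀, HasDerivAt f (f' t) t) (hf' : ∀ t ≥ x₀, HasDerivAt f' (f'' t) t)
    (hf'' : ∀ t ≥ x₀, f'' t ≤ -m) : Tendsto f atTop atBot := by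
  obtain ⟨x₁, hx₁⟩ := ((tendsto_atBot_of_hasDerivAt_le_neg hm hf' hf'').eventually
    (eventually_le_atBot (-m))).exists_forall_of_atTop
  exact tendsto_atBot_of_hasDerivAt_le_neg (x₀ := max x₀ x₁) hm
    (fun t ht => hf t (le_of_max_le_left ht)) fun t ht => hx₁ t (le_of_max_le_right ht)

theorem integrableAtFilter_atBot_of_comp_neg {E : Type*} [NormedAddCommGroup E] {f : ℝ → E}
    (h : IntegrableAtFilter (fun x => f (-x)) atTop) : IntegrableAtFilter f atBot := by
  obtain ⟨s, hs, hint⟩ := h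
  refine ⟨Neg.neg ⁻¹' s, tendsto_neg_atBot_atTop hs, ?_⟩
  simpa [Function.comp_def] using ((Measure.measurePreserving_neg volume).integrableOn_comp_preimage
    measurableEmbedding_neg (f := fun x => f (-x))).2 hint

structure IsPositiveSolution (a μ : ℝ) (q q' q'' : ℝ → ℝ) : Prop where
  hasDerivAt : ∀ s, HasDerivAt q (q' s) s
  hasDerivAt_deriv : ∀ s, HasDerivAt q' (q'' s) s
  pos : ∀ s, 0 < q s
  deriv_deriv_eq : ∀ s, q'' s = -μ - s * q' s * (a + 1 / (3 * q s))

namespace IsPositiveSolution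

variable {a μ : ℝ} {q q' q'' : ℝ → ℝ}

theorem comp_neg (h : IsPositiveSolution a μ q q' q'') :
    IsPositiveSolution a μ (fun s => q (-s)) (fun s => -q' (-s)) (fun s => q'' (-s)) where
  hasDerivAt s := ((h.hasDerivAt (-s)).comp s (hasDerivAt_neg s)).congr_deriv (by ring)
  hasDerivAt_deriv s :=
    ((h.hasDerivAt_deriv (-s)).comp s (hasDerivAt_neg s)).neg.congr_deriv (by ring)
  pos s := h.pos (-s)
  deriv_deriv_eq s := by rw [h.deriv_deriv_eq (-s)]; ring

theorem continuous (h : IsPositiveSolution a μ q q' q'') : Continuous q :=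
  continuous_iff_continuousAt.2 fun s => (h.hasDerivAt s).continuousAt

theorem not_tendsto_atBot (h : IsPositiveSolution a μ q q' q'') : ¬Tendsto q atTop atBot :=
  fun ht => by
    obtain ⟨s, hs⟩ := (ht.eventually (eventually_le_atBot 0)).exists
    exact (h.pos s).not_ge hs

theorem deriv_deriv_le (h : IsPositiveSolution a μ q q' q'') (ha : 0 ≤ a) {s K c : ℝ}
    (hs : 0 ≤ -(s * q' s)) (hK : -(s * q' s) ≤ K) (hc : a + 1 / (3 * q s) ≤ c) :
    q'' s ≤ -μ + K * c := by
  have hqs := h.pos s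
  have := mul_le_mul hK hc (by positivity) (hs.trans hK)
  rw [h.deriv_deriv_eq s]
  linarith

theorem deriv_nonpos (h : IsPositiveSolution a μ q q' q'') (hμ : 0 < μ) (h₀ : q' 0 = 0) :
    ∀ s ≥ 0, q' s ≤ 0 :=
  nonpos_of_hasDerivAt_neg_of_eq_zero (fun t _ => h.hasDerivAt_deriv t) h₀.le
    fun t _ ht => by rw [h.deriv_deriv_eq t, ht]; linarith

theorem antitoneOn (h : IsPositiveSolution a μ q q' q'') (hμ : 0 < μ) (h₀ : q' 0 = 0) :
    AntitoneOn q (Ici 0) :=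
  antitoneOn_Ici_of_hasDerivAt_nonpos (fun t _ => h.hasDerivAt t)
    fun t ht => h.deriv_nonpos hμ h₀ t ht.le

theorem exists_lt (h : IsPositiveSolution a μ q q' q'') (ha : 0 < a) (hμ : 0 < μ)
    (h₀ : q' 0 = 0) {δ : ℝ} (hδ : 0 < δ) : ∃ s ≥ 0, q s < δ := by
  by_contra! hge
  have hq' := h.deriv_nonpos hμ h₀
  set c := a + 1 / (3 * δ)
  set k := μ / (2 * c)
  have hc : 0 < c := by positivity
  have hk : 0 < k := by positivity
  have hkc : k * c = μ / 2 := by simp only [k]; field_simp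
  have hconcave : ∀ s ≥ 0, -k ≤ s * q' s → q'' s ≤ -(μ / 2) := fun s hs hsk => by
    have hcq : a + 1 / (3 * q s) ≤ c := by simp only [c]; gcongr; exact hge s hs
    linarith [h.deriv_deriv_le ha.le (K := k) (by nlinarith [hq' s hs]) (by linarith) hcq]
  obtain ⟨s₂, hs₂, hs₂k⟩ : ∃ s₂ ≥ 0, s₂ * q' s₂ < -k := by
    by_contra! hall
    exact h.not_tendsto_atBot <| tendsto_atBot_of_hasDerivAt_hasDerivAt_le_neg (half_pos hμ)
      (fun t _ => h.hasDerivAt t) (fun t _ => h.hasDerivAt_deriv t)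
      fun t ht => hconcave t ht (hall t ht)
  have hs₂pos : 0 < s₂ := hs₂.lt_of_ne (by rintro rfl; linarith)
  have hbarrier : ∀ s ≥ s₂, s * q' s + k ≤ 0 :=
    nonpos_of_hasDerivAt_neg_of_eq_zero (f' := fun t => q' t + t * q'' t)
      (fun t _ => (((hasDerivAt_id' t).mul (h.hasDerivAt_deriv t)).add_const k).congr_deriv
        (by ring))
      (by linarith) fun t ht hzero => by
        have ht0 : 0 < t := hs₂pos.trans_le ht
        nlinarith [hconcave t ht0.le (by linarith), hq' t ht0.le]
  refine h.not_tendsto_atBot <| tendsto_atBot_of_hasDerivAt_le (g := fun t => -k * log t)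
    (fun t _ => h.hasDerivAt t)
    (fun t ht => (hasDerivAt_log (hs₂pos.trans_le ht).ne').const_mul (-k))
    (fun t ht => ?_) (tendsto_log_atTop.const_mul_atTop_of_neg (neg_neg_of_pos hk))
  have ht0 : 0 < t := hs₂pos.trans ht
  rw [← div_eq_mul_inv, le_div_iff₀ ht0]
  linarith [hbarrier t ht.le]

theorem tendsto_zero (h : IsPositiveSolution a μ q q' q'') (ha : 0 < a) (hμ : 0 < μ)
    (h₀ : q' 0 = 0) : Tendsto q atTop (𝓝 0) := by
  refine tendsto_order.2 ⟨fun b hb => Eventually.of_forall fun s => hb.trans (h.pos s),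
    fun δ hδ => ?_⟩
  obtain ⟨σ, hσ, hσδ⟩ := h.exists_lt ha hμ h₀ hδ
  filter_upwards [eventually_ge_atTop σ] with s hs
  exact (h.antitoneOn hμ h₀ hσ (hσ.trans hs) hs).trans_lt hσδ

theorem exists_antitoneOn_mul (h : IsPositiveSolution a μ q q' q'') (ha : 0 < a)
    (hμ : 1 / 3 < μ) (h₀ : q' 0 = 0) : ∃ s₁ > 0, AntitoneOn (fun s => s * q s) (Ici s₁) := by
  set m := (μ - 1 / 3) / 2 with hm_def
  have hm : 0 < m := by linarith
  have hq' := h.deriv_nonpos (by linarith) h₀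
  obtain ⟨σ, hσ⟩ := (((h.tendsto_zero ha (by linarith) h₀).eventually
    (gt_mem_nhds (div_pos hm ha))).and (eventually_gt_atTop 0)).exists_forall_of_atTop
  have hconcave : ∀ s ≥ σ, -q s ≤ s * q' s → q'' s ≤ -m := fun s hs hsq => by
    have hqs := h.pos s
    have hq_small : a * q s < m := (lt_div_iff₀' ha).1 (hσ s hs).1
    have hexpand : q s * (a + 1 / (3 * q s)) = a * q s + 1 / 3 := by field_simp
    have hsq' : 0 ≤ -(s * q' s) := by nlinarith [hq' s (hσ s hs).2.le, (hσ s hs).2]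
    linarith [h.deriv_deriv_le ha.le (K := q s) hsq' (by linarith) le_rfl]
  obtain ⟨s₁, hs₁, hs₁q⟩ : ∃ s₁ ≥ σ, q s₁ + s₁ * q' s₁ ≤ 0 := by
    by_contra! hall
    exact h.not_tendsto_atBot <| tendsto_atBot_of_hasDerivAt_hasDerivAt_le_neg hm
      (fun t _ => h.hasDerivAt t) (fun t _ => h.hasDerivAt_deriv t)
      fun t ht => hconcave t ht (by linarith [hall t ht])
  have hderiv_mul : ∀ t, HasDerivAt (fun s => s * q s) (q t + t * q' t) t := fun t =>
    ((hasDerivAt_id' t).mul (h.hasDerivAt t)).congr_deriv (by ring)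
  have hderiv_mul' : ∀ t, HasDerivAt (fun s => s * q' s) (q' t + t * q'' t) t := fun t =>
    ((hasDerivAt_id' t).mul (h.hasDerivAt_deriv t)).congr_deriv (by ring)
  have hbarrier : ∀ s ≥ s₁, q s + s * q' s ≤ 0 :=
    nonpos_of_hasDerivAt_neg_of_eq_zero (fun t _ => (h.hasDerivAt t).add (hderiv_mul' t)) hs₁q
      fun t ht hzero => by
        have ht0 := (hσ t (hs₁.trans ht)).2
        nlinarith [hconcave t (hs₁.trans ht) (by linarith), hq' t ht0.le]
  exact ⟨s₁, (hσ s₁ hs₁).2, antitoneOn_Ici_of_hasDerivAt_nonpos (fun t _ => hderiv_mul t)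
    fun t ht => hbarrier t ht.le⟩

theorem isBigO_inv (h : IsPositiveSolution a μ q q' q'') (ha : 0 < a) (hμ : 1 / 3 < μ)
    (h₀ : q' 0 = 0) : q =O[atTop] fun s => s⁻¹ := by
  obtain ⟨s₁, hs₁, hanti⟩ := h.exists_antitoneOn_mul ha hμ h₀
  refine IsBigO.of_bound (s₁ * q s₁) ?_
  filter_upwards [eventually_ge_atTop s₁] with s hs
  have hs0 : 0 < s := hs₁.trans_le hs
  rw [norm_of_nonneg (h.pos s).le, norm_inv, norm_of_nonneg hs0.le, ← div_eq_mul_inv,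
    le_div_iff₀ hs0, mul_comm]
  exact hanti self_mem_Ici hs hs

theorem integrableAtFilter_sq (h : IsPositiveSolution a μ q q' q'') (ha : 0 < a)
    (hμ : 1 / 3 < μ) (h₀ : q' 0 = 0) : IntegrableAtFilter (fun s => q s ^ 2) atTop := by
  have hrpow : (fun s : ℝ => s⁻¹ ^ 2) = fun s => s ^ (-2 : ℝ) := funext fun s => by
    rw [show (-2 : ℝ) = ((-2 : ℤ) : ℝ) by norm_num, Real.rpow_intCast]
    simp [zpow_neg]
  refine ((h.isBigO_inv ha hμ h₀).pow 2).integrableAtFilter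
    ((h.continuous.pow 2).stronglyMeasurableAtFilter _ _) ?_
  rw [hrpow]
  exact integrableAtFilter_rpow_atTop_iff.2 (by norm_num)

end IsPositiveSolution

theorem stmt_7_general (a μ : ℝ) (ha : 0 < a) (hμ : 1 / 3 < μ)
    (q : ℝ → ℝ) (hq : ContDiff ℝ 2 q)
    (hode : ∀ s : ℝ, deriv (deriv q) s * q s + a * s * deriv q s * q s
      + μ * q s + (1 / 3) * s * deriv q s = 0)
    (hq0' : deriv q 0 = 0)
    (hpos : ∀ s : ℝ, 0 < q s) :
    Integrable (fun s : ℝ => q s ^ 2) := by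
  have hsol : IsPositiveSolution a μ q (deriv q) (deriv (deriv q)) :=
    { hasDerivAt := fun s => (hq.differentiable two_ne_zero s).hasDerivAt
      hasDerivAt_deriv := fun s =>
        ((contDiff_succ_iff_deriv.mp hq).2.2.differentiable one_ne_zero s).hasDerivAt
      pos := hpos
      deriv_deriv_eq := fun s => by
        have := hpos s
        field_simp
        linarith [hode s] }
  refine integrable_iff_integrableAtFilter_atBot_atTop.2
    ⟨⟨?_, hsol.integrableAtFilter_sq ha hμ hq0'⟩, (hsol.continuous.pow 2).locallyIntegrable⟩
  exact integrableAtFilter_atBot_of_comp_neg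
    (hsol.comp_neg.integrableAtFilter_sq ha hμ (by simp [hq0']))

theorem stmt_7 (a μ A : ℝ) (ha : 0 < a) (hμ : 1 / 3 < μ) (hA : 0 < A)
    (q : ℝ → ℝ) (hq : ContDiff ℝ 2 q)
    (hode : ∀ s : ℝ, deriv (deriv q) s * q s + a * s * deriv q s * q s
      + μ * q s + (1 / 3) * s * deriv q s = 0)
    (hq0 : q 0 = A) (hq0' : deriv q 0 = 0)
    (hpos : ∀ s : ℝ, 0 < q s) :
    Integrable (fun s : ℝ => q s ^ 2) :=
  stmt_7_general a μ ha hμ q hq hode hq0' hpos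
end

section
/- The following lower bound holds: ∫_0^∞ q(s) ds ≥ A^{3/2}·√(1 + 3aA) / (2·√3·μ). -/
/-!
Along a solution, the ODE gives the energy `W = q q' + a s q² / 2 + s q / 3 + c q²` the derivative
`W' = q'² + 2 c q q' + q / 3 + a q² / 2 - μ q`. For `c = √(1 / (3A) + a / 2)` the quadratic form in
`q'` is nonnegative while `0 < q ≤ A`, so `W' ≥ -μ q`. Since `q` is monotone and integrable,
`s q(s) → 0`, hence `W → 0` at infinity, and integrating over `(0, ∞)` gives
`c A² = W(0) ≤ μ ∫₀^∞ q`; the stated bound is a weakening of `c A² / μ`.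
-/

open MeasureTheory Filter Real Set Topology

lemma tendsto_mul_atTop_of_antitoneOn_of_integrableOn {f : ℝ → ℝ} (hf : AntitoneOn f (Ioi 0))
    (hf0 : ∀ x, 0 < x → 0 ≤ f x) (hfi : IntegrableOn f (Ioi 0)) :
    Tendsto (fun x => x * f x) atTop (𝓝 0) := by
  have hfi' : ∀ {x y : ℝ}, 0 ≤ x → x ≤ y → IntervalIntegrable f volume x y := fun hx hxy =>
    (intervalIntegrable_iff_integrableOn_Ioc_of_le hxy).2
      (hfi.mono_set fun s hs => lt_of_le_of_lt hx hs.1)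
  have hI : Tendsto (fun x => ∫ s in (0:ℝ)..x, f s) atTop (𝓝 (∫ s in Ioi 0, f s)) :=
    intervalIntegral_tendsto_integral_Ioi 0 hfi tendsto_id
  have htail : Tendsto (fun x => 2 * ∫ s in (x / 2)..x, f s) atTop (𝓝 0) := by
    have := (hI.sub (hI.comp (tendsto_id.atTop_div_const two_pos))).const_mul 2
    rw [sub_self, mul_zero] at this
    refine this.congr' ?_
    filter_upwards [eventually_ge_atTop 0] with x hx
    rw [Function.comp_apply, id, intervalIntegral.integral_interval_sub_left (hfi' le_rfl hx)
      (hfi' le_rfl (by linarith))]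
  refine tendsto_of_tendsto_of_tendsto_of_le_of_le' tendsto_const_nhds htail ?_ ?_
  · filter_upwards [eventually_gt_atTop 0] with x hx using mul_nonneg hx.le (hf0 x hx)
  · filter_upwards [eventually_gt_atTop 0] with x hx
    have hmono : ∫ _ in (x / 2)..x, f x ≤ ∫ s in (x / 2)..x, f s :=
      intervalIntegral.integral_mono_on (by linarith) intervalIntegrable_const
        (hfi' (by linarith) (by linarith)) fun s hs =>
          hf (lt_of_lt_of_le (by linarith) hs.1) hx hs.2
    rw [intervalIntegral.integral_const, smul_eq_mul] at hmono
    linarith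

lemma le_mul_integral_Ioi_of_hasDerivAt {W W' f : ℝ → ℝ} {μ : ℝ}
    (hW : ∀ s, HasDerivAt W (W' s) s) (hfi : IntegrableOn f (Ioi 0))
    (hW' : ∀ s, 0 < s → -(μ * f s) ≤ W' s) (hlim : Tendsto W atTop (𝓝 0)) :
    W 0 ≤ μ * ∫ s in Ioi 0, f s := by
  have hI : Tendsto (fun T => W T + μ * ∫ s in (0:ℝ)..T, f s) atTop
      (𝓝 (0 + μ * ∫ s in Ioi 0, f s)) :=
    hlim.add ((intervalIntegral_tendsto_integral_Ioi 0 hfi tendsto_id).const_mul μ)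
  rw [zero_add] at hI
  refine ge_of_tendsto hI ?_
  filter_upwards [eventually_ge_atTop 0] with T hT
  have hftc : ∫ s in (0:ℝ)..T, -(μ * f s) ≤ W T - W 0 :=
    intervalIntegral.integral_le_sub_of_hasDeriv_right_of_le hT
      (fun s _ => (hW s).continuousAt.continuousWithinAt)
      (fun s _ => (hW s).hasDerivWithinAt)
      (((integrableOn_Icc_iff_integrableOn_Ioc).2
        (hfi.mono_set Ioc_subset_Ioi_self)).const_mul μ).neg
      (fun s hs => hW' s hs.1)
  rw [intervalIntegral.integral_neg, intervalIntegral.integral_const_mul] at hftc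
  linarith

noncomputable def energy (a c : ℝ) (q : ℝ → ℝ) (s : ℝ) : ℝ :=
  deriv q s * q s + a * s * q s ^ 2 / 2 + s * q s / 3 + c * q s ^ 2

lemma hasDerivAt_energy {a c μ s : ℝ} {q : ℝ → ℝ} (hq : ContDiff ℝ 2 q)
    (hode : deriv (deriv q) s * q s + a * s * deriv q s * q s
      + μ * q s + (1 / 3) * s * deriv q s = 0) :
    HasDerivAt (energy a c q)
      (deriv q s ^ 2 + 2 * c * q s * deriv q s + (q s / 3 + a * q s ^ 2 / 2) - μ * q s) s := by
  have hq1 : HasDerivAt q (deriv q s) s := (hq.differentiable (by norm_num) s).hasDerivAt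
  have hq2 : HasDerivAt (deriv q) (deriv (deriv q) s) s :=
    ((hq.iterate_deriv' 1 1).differentiable (by norm_num) s).hasDerivAt
  refine ((((hq2.mul hq1).add ((((hasDerivAt_id s).const_mul a).mul (hq1.pow 2)).div_const 2)).add
    (((hasDerivAt_id s).mul hq1).div_const 3)).add ((hq1.pow 2).const_mul c)).congr_deriv ?_
  simp only [id, Pi.pow_apply]
  linear_combination hode

lemma tendsto_energy_atTop {a c : ℝ} {q : ℝ → ℝ} (hq : Tendsto q atTop (𝓝 0))
    (hq' : Tendsto (deriv q) atTop (𝓝 0)) (hsq : Tendsto (fun s => s * q s) atTop (𝓝 0)) :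
    Tendsto (energy a c q) atTop (𝓝 0) := by
  have := (((hq'.mul hq).add (((hsq.mul hq).const_mul a).div_const 2)).add
    (hsq.div_const 3)).add ((hq.pow 2).const_mul c)
  simp only [mul_zero, zero_div, add_zero, zero_pow two_ne_zero] at this
  refine this.congr fun s => ?_
  simp only [energy]
  ring

/-- The constant `√(1 / (3A) + a / 2)` is the largest `c` for which the discriminant of this
quadratic in `p` is nonpositive for every `x ∈ [0, A]`. -/
lemma sq_add_mul_add_nonneg {a A x : ℝ} (ha : 0 ≤ a) (hA : 0 < A) (hx : 0 ≤ x) (hxA : x ≤ A)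
    (p : ℝ) : 0 ≤ p ^ 2 + 2 * √(1 / (3 * A) + a / 2) * x * p + (x / 3 + a * x ^ 2 / 2) := by
  have hc : √(1 / (3 * A) + a / 2) ^ 2 = 1 / (3 * A) + a / 2 := sq_sqrt (by positivity)
  have hdisc : (√(1 / (3 * A) + a / 2) * x) ^ 2 ≤ x / 3 + a * x ^ 2 / 2 := by
    have hx2 : x ^ 2 / (3 * A) ≤ x / 3 := by
      rw [div_le_div_iff₀ (by positivity) (by norm_num)]
      nlinarith
    rw [mul_pow, hc]
    linarith [show (1 / (3 * A) + a / 2) * x ^ 2 = x ^ 2 / (3 * A) + a * x ^ 2 / 2 by ring]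
  nlinarith [sq_nonneg (p + √(1 / (3 * A) + a / 2) * x)]

lemma rpow_three_halves_mul_sqrt_div_le {a A : ℝ} (ha : 0 ≤ a) (hA : 0 < A) :
    A ^ ((3 : ℝ) / 2) * √(1 + 3 * a * A) / (2 * √3) ≤ √(1 / (3 * A) + a / 2) * A ^ 2 := by
  have h32 : A ^ ((3 : ℝ) / 2) = √A ^ 3 := by
    rw [rpow_div_two_eq_sqrt _ hA.le]; norm_cast
  rw [h32, ← pow_le_pow_iff_left₀ (by positivity) (by positivity) two_ne_zero]
  have hA3 : (√A ^ 3) ^ 2 = A ^ 3 := by rw [← pow_mul, mul_comm, pow_mul, sq_sqrt hA.le]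
  rw [div_pow, mul_pow, mul_pow, mul_pow, hA3, sq_sqrt (by positivity), sq_sqrt (by positivity),
    sq_sqrt (by positivity), div_le_iff₀ (by positivity)]
  field_simp
  nlinarith [pow_pos hA 4, pow_pos hA 5]

theorem stmt_12_general (a μ A : ℝ) (ha : 0 < a) (hμ : 1 / 3 < μ) (hA : 0 < A)
    (q : ℝ → ℝ) (hq : ContDiff ℝ 2 q)
    (hode : ∀ s : ℝ, deriv (deriv q) s * q s + a * s * deriv q s * q s
      + μ * q s + (1 / 3) * s * deriv q s = 0)
    (hq0 : q 0 = A) (hq0' : deriv q 0 = 0)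
    (hpos : ∀ s : ℝ, 0 < q s)
    (hanti : StrictAntiOn q (Set.Ioi 0))
    (hlim : Tendsto q atTop (nhds 0)) (hlim' : Tendsto (deriv q) atTop (nhds 0))
    (hint : Integrable q) :
    ∫ s in Set.Ioi (0 : ℝ), q s
      ≥ A ^ ((3 : ℝ) / 2) * Real.sqrt (1 + 3 * a * A) / (2 * Real.sqrt 3 * μ) := by
  have hμ0 : 0 < μ := by linarith
  have hmono : AntitoneOn q (Ici 0) := by
    have := hanti.antitoneOn.dual_right.insert_of_continuousWithinAt
      (inferInstance : (𝓝[>] (0 : ℝ)).NeBot) hq.continuous.continuousWithinAt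
    rwa [Ioi_insert] at this
  set c := √(1 / (3 * A) + a / 2)
  have hsq : Tendsto (fun s => s * q s) atTop (𝓝 0) :=
    tendsto_mul_atTop_of_antitoneOn_of_integrableOn hanti.antitoneOn (fun s _ => (hpos s).le)
      hint.integrableOn
  have henergy : energy a c q 0 ≤ μ * ∫ s in Ioi 0, q s :=
    le_mul_integral_Ioi_of_hasDerivAt (fun s => hasDerivAt_energy hq (hode s)) hint.integrableOn
      (fun s hs => by
        have := sq_add_mul_add_nonneg ha.le hA (hpos s).le
          (hq0 ▸ hmono self_mem_Ici hs.le hs.le) (deriv q s)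
        linarith)
      (tendsto_energy_atTop hlim hlim' hsq)
  have henergy0 : energy a c q 0 = c * A ^ 2 := by simp [energy, hq0, hq0']
  rw [ge_iff_le, ← div_div, div_le_iff₀ hμ0]
  calc A ^ ((3 : ℝ) / 2) * √(1 + 3 * a * A) / (2 * √3) ≤ c * A ^ 2 :=
        rpow_three_halves_mul_sqrt_div_le ha.le hA
    _ ≤ _ := henergy0 ▸ henergy
    _ = _ := mul_comm _ _

theorem stmt_12 (a μ A : ℝ) (ha : 0 < a) (hμ : 1 / 3 < μ) (hA : 0 < A)
    (q : ℝ → ℝ) (hq : ContDiff ℝ 2 q)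
    (hode : ∀ s : ℝ, deriv (deriv q) s * q s + a * s * deriv q s * q s
      + μ * q s + (1 / 3) * s * deriv q s = 0)
    (hq0 : q 0 = A) (hq0' : deriv q 0 = 0)
    (hpos : ∀ s : ℝ, 0 < q s)
    (heven : ∀ s : ℝ, q (-s) = q s)
    (hanti : StrictAntiOn q (Set.Ioi 0))
    (hlim : Tendsto q atTop (nhds 0)) (hlim' : Tendsto (deriv q) atTop (nhds 0))
    (hint : Integrable q) :
    ∫ s in Set.Ioi (0 : ℝ), q s
      ≥ A ^ ((3 : ℝ) / 2) * Real.sqrt (1 + 3 * a * A) / (2 * Real.sqrt 3 * μ) :=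
  stmt_12_general a μ A ha hμ hA q hq hode hq0 hq0' hpos hanti hlim hlim' hint
end

section
/- The following upper bound holds: ∫_{-∞}^{∞} q'(s)² ds ≤ 2·√(3·A³·μ² / (1 + 3aA)). -/
/-!
Since `q` is even, `∫ q'² = 2 ∫₀^∞ q'²`, and on `[0, ∞)` we have `-q' ≥ 0` with
`∫₀^∞ (-q') = q 0 = A`; so it suffices to bound `-q' ≤ M := √(3μ²A / (1 + 3aA))` there.
For `s ≥ 0` the equation gives `q'' ≥ -μ`, hence `-q'(s) ≤ μ s`. Since `q'(0) = 0` and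
`q' → 0`, a value of `-q'` above `M` would force an interior maximum `c > 0` of `-q'`, where
`q''(c) = 0` and the equation reduces to `(a q + 1/3) c t = μ q` with `t = -q'(c)`. Together with
`t ≤ μ c` this yields `t² ≤ 3μ² q / (1 + 3a q) ≤ M²`, as `x ↦ x / (1 + 3a x)` is increasing.
-/

open MeasureTheory Filter Real Set Topology

lemma deriv_neg_of_even {f : ℝ → ℝ} (hf : ∀ x, f (-x) = f x) (x : ℝ) :
    deriv f (-x) = -deriv f x := by
  have h := deriv_comp_neg f x
  rw [show (fun x => f (-x)) = f from funext hf] at h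
  linarith

lemma integral_eq_two_mul_setIntegral_Ioi_of_even {f : ℝ → ℝ} (hf : ∀ x, f (-x) = f x)
    (hint : Integrable f) : ∫ x, f x = 2 * ∫ x in Ioi 0, f x := by
  have hIic : ∫ x in Iic 0, f x = ∫ x in Ioi 0, f x := by
    simpa [hf] using integral_comp_neg_Iic (0 : ℝ) f
  rw [← integral_add_compl measurableSet_Iic hint, compl_Iic, hIic]
  ring

lemma deriv_nonpos_of_antitoneOn_Ioi {f : ℝ → ℝ} {b x : ℝ} (hf : AntitoneOn f (Ioi b))
    (hd : DifferentiableAt ℝ f x) (hx : b ≤ x) : deriv f x ≤ 0 := by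
  have hacc : AccPt x (𝓟 (Ioi b)) :=
    accPt_principal_iff_nhdsWithin.mpr <| (nhdsGT_neBot x).mono <|
      nhdsWithin_mono _ fun y hy => ⟨hx.trans_lt hy, ne_of_gt hy⟩
  exact hd.hasDerivAt.hasDerivWithinAt.nonpos_of_antitoneOn hacc hf

lemma exists_isLocalMax_ge_of_tendsto {g : ℝ → ℝ} {b s L : ℝ} (hg : Continuous g)
    (hlim : Tendsto g atTop (𝓝 L)) (hs : b ≤ s) (hb : g b < g s) (hL : L < g s) :
    ∃ c, b < c ∧ IsLocalMax g c ∧ g s ≤ g c := by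
  obtain ⟨R, hR⟩ := eventually_atTop.mp (hlim.eventually (eventually_lt_nhds hL))
  obtain ⟨c, hc, hmax⟩ := isCompact_Icc.exists_isMaxOn
    (nonempty_Icc.mpr (hs.trans (le_max_left s R))) hg.continuousOn
  have hsc : g s ≤ g c := hmax ⟨hs, le_max_left s R⟩
  have hbc : b < c := hc.1.lt_of_ne (by rintro rfl; linarith)
  have hcR : c < max s R := hc.2.lt_of_ne (by
    rintro rfl
    linarith [hR (max s R) (le_max_right s R)])
  exact ⟨c, hbc, hmax.isLocalMax (Icc_mem_nhds hbc hcR), hsc⟩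

lemma integral_sq_le_mul_integral {α : Type*} [MeasurableSpace α] {ν : Measure α}
    {g : α → ℝ} {M : ℝ} (hg : Integrable g ν) (h0 : ∀ᵐ x ∂ν, 0 ≤ g x)
    (hM : ∀ᵐ x ∂ν, g x ≤ M) : ∫ x, g x ^ 2 ∂ν ≤ M * ∫ x, g x ∂ν := by
  rw [← integral_const_mul]
  refine integral_mono_of_nonneg (h0.mono fun x hx => sq_nonneg _) (hg.const_mul M) ?_
  filter_upwards [h0, hM] with x hx0 hxM
  rw [sq]
  exact mul_le_mul_of_nonneg_right hxM hx0

lemma setIntegral_Ioi_deriv_sq_le {q : ℝ → ℝ} {b M : ℝ} (hq : Differentiable ℝ q)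
    (hlim : Tendsto q atTop (𝓝 0)) (hdec : ∀ x ∈ Ioi b, deriv q x ≤ 0)
    (hM : ∀ x ∈ Ioi b, -deriv q x ≤ M) : ∫ x in Ioi b, deriv q x ^ 2 ≤ M * q b := by
  have hderiv : ∀ x ∈ Ici b, HasDerivAt q (deriv q x) x := fun x _ => (hq x).hasDerivAt
  have hint : ∫ x in Ioi b, -deriv q x = q b := by
    rw [integral_neg, integral_Ioi_of_hasDerivAt_of_nonpos' hderiv hdec hlim]
    ring
  simp_rw [← neg_sq (deriv q _)]
  rw [← hint]
  exact integral_sq_le_mul_integral (integrableOn_Ioi_deriv_of_nonpos' hderiv hdec hlim).neg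
    (ae_restrict_of_forall_mem measurableSet_Ioi fun x hx => neg_nonneg.mpr (hdec x hx))
    (ae_restrict_of_forall_mem measurableSet_Ioi hM)

lemma le_sqrt_of_critical_point {a μ A q c t : ℝ} (ha : 0 ≤ a) (hμ : 0 ≤ μ) (hq : 0 ≤ q)
    (hqA : q ≤ A) (hc : 0 < c) (ht : t ≤ μ * c) (hcrit : (a * q + 1 / 3) * c * t = μ * q) :
    t ≤ √(3 * μ ^ 2 * A / (1 + 3 * a * A)) := by
  have hcq : t ^ 2 * (a * q + 1 / 3) * c ≤ μ ^ 2 * q * c :=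
    calc t ^ 2 * (a * q + 1 / 3) * c = t * (μ * q) := by rw [← hcrit]; ring
      _ ≤ μ * c * (μ * q) := mul_le_mul_of_nonneg_right ht (by positivity)
      _ = μ ^ 2 * q * c := by ring
  have htq : t ^ 2 * (1 + 3 * a * q) ≤ 3 * μ ^ 2 * q := by
    linarith [le_of_mul_le_mul_right hcq hc]
  have htA : t ^ 2 * (1 + 3 * a * A) * (1 + 3 * a * q) ≤ 3 * μ ^ 2 * A * (1 + 3 * a * q) :=
    calc t ^ 2 * (1 + 3 * a * A) * (1 + 3 * a * q)
        = t ^ 2 * (1 + 3 * a * q) * (1 + 3 * a * A) := by ring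
      _ ≤ 3 * μ ^ 2 * q * (1 + 3 * a * A) :=
        mul_le_mul_of_nonneg_right htq (by nlinarith)
      _ ≤ 3 * μ ^ 2 * A * (1 + 3 * a * q) := by
        nlinarith [mul_le_mul_of_nonneg_left hqA (sq_nonneg μ)]
  refine le_sqrt_of_sq_le ((le_div_iff₀ (by nlinarith)).mpr ?_)
  exact le_of_mul_le_mul_right htA (by positivity)

def SolvesProfileODE (a μ : ℝ) (q : ℝ → ℝ) : Prop :=
  ∀ s : ℝ, deriv (deriv q) s * q s + a * s * deriv q s * q s + μ * q s
    + (1 / 3) * s * deriv q s = 0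

namespace SolvesProfileODE

variable {a μ : ℝ} {q : ℝ → ℝ}

lemma neg_le_deriv_deriv (hode : SolvesProfileODE a μ q) (ha : 0 ≤ a) {s : ℝ} (hs : 0 ≤ s)
    (hq : 0 < q s) (hq' : deriv q s ≤ 0) : -μ ≤ deriv (deriv q) s := by
  have h : 0 ≤ (deriv (deriv q) s + μ) * q s := by
    nlinarith [hode s, mul_nonneg (mul_nonneg hs (neg_nonneg.mpr hq'))
      (by positivity : 0 ≤ a * q s + 1 / 3)]
  linarith [(mul_nonneg_iff_of_pos_right hq).mp h]

lemma critical_point_eq (hode : SolvesProfileODE a μ q) {c : ℝ}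
    (hc : deriv (deriv q) c = 0) : (a * q c + 1 / 3) * c * -deriv q c = μ * q c := by
  linear_combination (-1 : ℝ) * hode c + q c * hc

lemma neg_deriv_le_mul (hode : SolvesProfileODE a μ q) (ha : 0 ≤ a)
    (hq' : Differentiable ℝ (deriv q)) (hq0' : deriv q 0 = 0) (hpos : ∀ s, 0 < q s)
    (hdec : ∀ s, 0 ≤ s → deriv q s ≤ 0) {s : ℝ} (hs : 0 ≤ s) : -deriv q s ≤ μ * s := by
  have h := (convex_Ici 0).image_sub_le_mul_sub_of_deriv_le (f := fun x => -deriv q x)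
    hq'.neg.continuous.continuousOn hq'.neg.differentiableOn (C := μ) (fun x hx => by
      rw [interior_Ici] at hx
      rw [deriv.fun_neg, neg_le]
      exact hode.neg_le_deriv_deriv ha hx.le (hpos x) (hdec x hx.le)) 0 self_mem_Ici s hs hs
  simpa [hq0'] using h

lemma neg_deriv_le_sqrt (hode : SolvesProfileODE a μ q) (ha : 0 ≤ a) (hμ : 0 ≤ μ) {A : ℝ}
    (hq' : Differentiable ℝ (deriv q)) (hq0' : deriv q 0 = 0) (hpos : ∀ s, 0 < q s)
    (hdec : ∀ s, 0 ≤ s → deriv q s ≤ 0) (hqA : ∀ s, 0 ≤ s → q s ≤ A)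
    (hlim' : Tendsto (deriv q) atTop (𝓝 0)) {s : ℝ} (hs : 0 ≤ s) :
    -deriv q s ≤ √(3 * μ ^ 2 * A / (1 + 3 * a * A)) := by
  by_contra! hgt
  have hsqrt := sqrt_nonneg (3 * μ ^ 2 * A / (1 + 3 * a * A))
  obtain ⟨c, hc, hmax, hsc⟩ := exists_isLocalMax_ge_of_tendsto (g := fun x => -deriv q x)
    hq'.continuous.neg
    (by simpa using hlim'.neg) hs (by simp only [hq0', neg_zero]; linarith) (by linarith)
  have hcrit : deriv (deriv q) c = 0 := by
    simpa using hmax.deriv_eq_zero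
  have := le_sqrt_of_critical_point ha hμ (hpos c).le (hqA c hc.le) hc
    (hode.neg_deriv_le_mul ha hq' hq0' hpos hdec hc.le) (hode.critical_point_eq hcrit)
  linarith

end SolvesProfileODE

theorem stmt_14 (a μ A : ℝ) (ha : 0 < a) (hμ : 1 / 3 < μ) (hA : 0 < A)
    (q : ℝ → ℝ) (hq : ContDiff ℝ 2 q)
    (hode : ∀ s : ℝ, deriv (deriv q) s * q s + a * s * deriv q s * q s
      + μ * q s + (1 / 3) * s * deriv q s = 0)
    (hq0 : q 0 = A) (hq0' : deriv q 0 = 0)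
    (hpos : ∀ s : ℝ, 0 < q s)
    (heven : ∀ s : ℝ, q (-s) = q s)
    (hanti : StrictAntiOn q (Set.Ioi 0))
    (hlim : Tendsto q atTop (nhds 0)) (hlim' : Tendsto (deriv q) atTop (nhds 0))
    (hintd : Integrable (fun s : ℝ => deriv q s ^ 2)) :
    ∫ s : ℝ, deriv q s ^ 2
      ≤ 2 * Real.sqrt (3 * A ^ 3 * μ ^ 2 / (1 + 3 * a * A)) := by
  have hqd : Differentiable ℝ q := hq.differentiable (by norm_num)
  have hq'd : Differentiable ℝ (deriv q) := (hq.deriv' (n := 1)).differentiable one_ne_zero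
  have hdec : ∀ s, 0 ≤ s → deriv q s ≤ 0 := fun s hs =>
    deriv_nonpos_of_antitoneOn_Ioi hanti.antitoneOn (hqd s) hs
  have hqA : ∀ s, 0 ≤ s → q s ≤ A := fun s hs => hq0 ▸
    antitoneOn_of_deriv_nonpos (convex_Ici 0) hqd.continuous.continuousOn hqd.differentiableOn
      (fun x hx => hdec x (interior_Ici.subset hx).le) self_mem_Ici hs hs
  have hM : ∀ s, 0 ≤ s → -deriv q s ≤ √(3 * μ ^ 2 * A / (1 + 3 * a * A)) := fun s =>
    SolvesProfileODE.neg_deriv_le_sqrt hode ha.le (by linarith) hq'd hq0' hpos hdec hqA hlim'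
  have hsqrt : √(3 * A ^ 3 * μ ^ 2 / (1 + 3 * a * A))
      = √(3 * μ ^ 2 * A / (1 + 3 * a * A)) * A := by
    rw [← sqrt_sq hA.le, ← sqrt_mul (by positivity), sqrt_sq hA.le]
    ring_nf
  calc ∫ s, deriv q s ^ 2 = 2 * ∫ s in Ioi 0, deriv q s ^ 2 :=
        integral_eq_two_mul_setIntegral_Ioi_of_even
          (fun s => by rw [deriv_neg_of_even heven, neg_sq]) hintd
    _ ≤ 2 * (√(3 * μ ^ 2 * A / (1 + 3 * a * A)) * q 0) := by
        gcongr
        exact setIntegral_Ioi_deriv_sq_le hqd hlim (fun s hs => hdec s (le_of_lt hs))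
          (fun s hs => hM s (le_of_lt hs))
    _ = 2 * √(3 * A ^ 3 * μ ^ 2 / (1 + 3 * a * A)) := by rw [hq0, hsqrt]
end
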